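/- arXiv:2010.15522 — 2 statements merged into one kernel-verified Lean document; each statement's English description precedes it below -/
import Mathlib

section
/- Every tree T on n ≥ 2 vertices and every vertex v of T satisfies μ_T(v) > μ_T, where μ_T is the mean subtree order of T and μ_T(v) is the local mean subtree order at v. -/
open scoped Classical

/-- The subtrees (nonempty connected induced subgraphs) of a graph, as vertex sets. -/
noncomputable def subtrees {V : Type*} [Fintype V] (G : SimpleGraph V) :
    Finset (Finset V) :=
  Finset.univ.filter (fun s => s.Nonempty ∧ (G.induce (s : Set V)).Connected)

/-- The subtrees of a graph containing a fixed vertex `r`. -/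
noncomputable def subtreesThrough {V : Type*} [Fintype V] (G : SimpleGraph V) (r : V) :
    Finset (Finset V) :=
  Finset.univ.filter (fun s => r ∈ s ∧ (G.induce (s : Set V)).Connected)

/-!
Induction on the subtree `t` of the tree, rooted at `r ∈ t`. The subtrees of `t` avoiding `r`
fall apart into the subtrees of the branches `b_w` of `t` at the neighbours `w` of `r`, and by
induction their mean order on `b_w` is at most the mean order of the subtrees of `b_w` through
`w`. A subtree of `t` through `r` is uniquely the union of a subtree through `r` of `t \ b_w` and
either nothing or a subtree through `w` of `b_w`. With `C` subtrees through `w` of total order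
`R`, this makes the mean order of the subtrees through `r` at least `1 + R / (C + 1)`, which
exceeds `R / C` because `R / C ≤ |b_w| ≤ C`. So every block of subtrees avoiding `r` has mean
order below that of the subtrees through `r`, and adding those blocks lowers the mean.
-/

namespace Finset

variable {α ι κ : Type*} [DecidableEq ι] {f : ι → ℝ}

lemma sum_div_card_union_lt {A B : Finset ι} (hBA : Disjoint B A) (hA : A.Nonempty)
    (hB : B.Nonempty) (h : (∑ i ∈ A, f i) / #A < (∑ i ∈ B, f i) / #B) :
    (∑ i ∈ B ∪ A, f i) / #(B ∪ A) < (∑ i ∈ B, f i) / #B := by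
  have hA' : (0 : ℝ) < #A := by exact_mod_cast hA.card_pos
  have hB' : (0 : ℝ) < #B := by exact_mod_cast hB.card_pos
  rw [div_lt_div_iff₀ hA' hB'] at h
  rw [sum_union hBA, card_union_of_disjoint hBA, Nat.cast_add,
    div_lt_div_iff₀ (by positivity) hB']
  linarith

lemma sum_div_card_biUnion_lt {I : Finset κ} {S : κ → Finset ι}
    (hS : (I : Set κ).PairwiseDisjoint S) (hI : I.Nonempty) (hne : ∀ k ∈ I, (S k).Nonempty)
    {m : ℝ} (h : ∀ k ∈ I, (∑ i ∈ S k, f i) / #(S k) < m) :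
    (∑ i ∈ I.biUnion S, f i) / #(I.biUnion S) < m := by
  have hpos : ∀ k ∈ I, (0 : ℝ) < #(S k) := fun k hk => by exact_mod_cast (hne k hk).card_pos
  rw [sum_biUnion hS, card_biUnion hS, Nat.cast_sum, div_lt_iff₀ (sum_pos hpos hI), mul_sum]
  exact sum_lt_sum_of_nonempty hI fun k hk => (div_lt_iff₀ (hpos k hk)).1 (h k hk)

lemma injOn_union_of_disjoint_of_subset (b : Finset α) :
    Set.InjOn (fun p : Finset α × Finset α => p.1 ∪ p.2) {p | Disjoint p.1 b ∧ p.2 ⊆ b} := by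
  have key : ∀ p ∈ {p : Finset α × Finset α | Disjoint p.1 b ∧ p.2 ⊆ b},
      (p.1 ∪ p.2) \ b = p.1 ∧ (p.1 ∪ p.2) ∩ b = p.2 := fun p ⟨hd, hc⟩ =>
    ⟨by rw [union_sdiff_distrib, sdiff_eq_empty_iff_subset.2 hc, union_empty,
        hd.sdiff_eq_left],
      by rw [union_inter_distrib_right, disjoint_iff_inter_eq_empty.1 hd, empty_union,
        inter_eq_left.2 hc]⟩
  intro p hp q hq h
  replace h : p.1 ∪ p.2 = q.1 ∪ q.2 := h
  exact Prod.ext (by rw [← (key p hp).1, ← (key q hq).1, h])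
    (by rw [← (key p hp).2, ← (key q hq).2, h])

end Finset

noncomputable def meanOrder {V : Type*} (S : Finset (Finset V)) : ℝ :=
  (∑ s ∈ S, (s.card : ℝ)) / S.card

namespace SimpleGraph

open Finset

variable {V : Type*} {G : SimpleGraph V}

variable (G) in
def ReachIn (s : Finset V) (x y : V) : Prop :=
  ∃ p : G.Walk x y, ∀ z ∈ p.support, z ∈ s

namespace ReachIn

variable {s s' : Finset V} {x y z : V}

lemma refl (hx : x ∈ s) : G.ReachIn s x x :=
  ⟨.nil, by simpa using hx⟩

lemma of_adj (hx : x ∈ s) (hy : y ∈ s) (hxy : G.Adj x y) : G.ReachIn s x y :=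
  ⟨.cons hxy .nil, by simp [hx, hy]⟩

lemma symm (h : G.ReachIn s x y) : G.ReachIn s y x :=
  let ⟨p, hp⟩ := h
  ⟨p.reverse, by simpa using hp⟩

lemma trans (h : G.ReachIn s x y) (h' : G.ReachIn s y z) : G.ReachIn s x z := by
  obtain ⟨p, hp⟩ := h
  obtain ⟨q, hq⟩ := h'
  refine ⟨p.append q, fun u hu => ?_⟩
  rcases Walk.mem_support_append_iff _ _ |>.1 hu with hu | hu
  exacts [hp u hu, hq u hu]

lemma mono (hss : s ⊆ s') (h : G.ReachIn s x y) : G.ReachIn s' x y :=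
  let ⟨p, hp⟩ := h
  ⟨p, fun z hz => hss (hp z hz)⟩

lemma mem_right (h : G.ReachIn s x y) : y ∈ s :=
  let ⟨p, hp⟩ := h
  hp _ p.end_mem_support

lemma of_mem_support {p : G.Walk x y} (hp : ∀ u ∈ p.support, u ∈ s) (hz : z ∈ p.support) :
    G.ReachIn s x z :=
  ⟨p.takeUntil z hz, fun u hu => hp u (p.support_takeUntil_subset_support hz hu)⟩

end ReachIn

lemma connected_induce_of_forall_reachIn {s : Finset V} {r : V} (hr : r ∈ s)
    (h : ∀ x ∈ s, G.ReachIn s r x) : (G.induce (s : Set V)).Connected :=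
  G.induce_connected_of_patches r hr fun hx => by
    obtain ⟨p, hp⟩ := h _ hx
    exact ⟨_, fun z hz => hp z hz, p.start_mem_support, p.end_mem_support,
      p.connected_induce_support.preconnected _ _⟩

lemma connected_induce_singleton (r : V) : (G.induce (({r} : Finset V) : Set V)).Connected :=
  connected_induce_of_forall_reachIn (mem_singleton_self r) fun x hx => by
    rw [Finset.mem_singleton.1 hx]
    exact .refl (mem_singleton_self r)

lemma exists_isPath_of_connected_induce {s : Finset V}
    (hs : (G.induce (s : Set V)).Connected) {x y : V} (hx : x ∈ s) (hy : y ∈ s) :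
    ∃ p : G.Walk x y, p.IsPath ∧ ∀ z ∈ p.support, z ∈ s := by
  obtain ⟨q⟩ := hs ⟨x, hx⟩ ⟨y, hy⟩
  let p : G.Walk x y := q.map (Embedding.induce (s : Set V)).toHom
  have hp : ∀ z ∈ p.support, z ∈ s := by
    intro z hz
    rw [show p.support = _ from Walk.support_map _ q, List.mem_map] at hz
    obtain ⟨⟨z, hz⟩, _, rfl⟩ := hz
    exact hz
  exact ⟨p.toPath, p.toPath.2, fun z hz => hp z (p.support_toPath_subset_support hz)⟩

lemma reachIn_of_connected_induce {s : Finset V} (hs : (G.induce (s : Set V)).Connected)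
    {x y : V} (hx : x ∈ s) (hy : y ∈ s) : G.ReachIn s x y :=
  let ⟨p, _, hp⟩ := exists_isPath_of_connected_induce hs hx hy
  ⟨p, hp⟩

lemma IsAcyclic.support_subset_of_connected_induce (hG : G.IsAcyclic) {s : Finset V}
    (hs : (G.induce (s : Set V)).Connected) {x y : V} (hx : x ∈ s) (hy : y ∈ s)
    {p : G.Walk x y} (hp : p.IsPath) : ∀ z ∈ p.support, z ∈ s := by
  obtain ⟨q, hq, hqs⟩ := exists_isPath_of_connected_induce hs hx hy
  have hpq : p = q := congrArg Subtype.val ((hG.subsingleton_path x y).elim ⟨p, hp⟩ ⟨q, hq⟩)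
  exact hpq ▸ hqs

lemma IsAcyclic.connected_induce_inter (hG : G.IsAcyclic) {s s' : Finset V}
    (hs : (G.induce (s : Set V)).Connected) (hs' : (G.induce (s' : Set V)).Connected)
    (hne : (s ∩ s').Nonempty) : (G.induce ((s ∩ s' : Finset V) : Set V)).Connected := by
  obtain ⟨x, hx⟩ := hne
  rw [mem_inter] at hx
  refine connected_induce_of_forall_reachIn (mem_inter.2 hx) fun y hy => ?_
  rw [mem_inter] at hy
  obtain ⟨p, hp, hps⟩ := exists_isPath_of_connected_induce hs hx.1 hy.1
  have hps' := hG.support_subset_of_connected_induce hs' hx.2 hy.2 hp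
  exact ⟨p, fun z hz => mem_inter.2 ⟨hps z hz, hps' z hz⟩⟩

section Branch

variable {t : Finset V} {r w w' x : V}

variable (G) in
noncomputable def branch (t : Finset V) (r w : V) : Finset V :=
  (t.erase r).filter (G.ReachIn (t.erase r) w)

lemma mem_branch : x ∈ G.branch t r w ↔ x ∈ t.erase r ∧ G.ReachIn (t.erase r) w x :=
  mem_filter

lemma branch_subset_erase : G.branch t r w ⊆ t.erase r :=
  filter_subset _ _

lemma branch_subset : G.branch t r w ⊆ t :=
  branch_subset_erase.trans (erase_subset r t)

lemma notMem_branch : r ∉ G.branch t r w :=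
  fun h => (mem_erase.1 (branch_subset_erase h)).1 rfl

lemma mem_branch_self (hw : w ∈ t.erase r) : w ∈ G.branch t r w :=
  mem_branch.2 ⟨hw, .refl hw⟩

lemma mem_erase_of_mem_filter_adj (hw : w ∈ t.filter (G.Adj r)) : w ∈ t.erase r :=
  mem_erase.2 ⟨(G.ne_of_adj (mem_filter.1 hw).2).symm, (mem_filter.1 hw).1⟩

lemma reachIn_branch (hx : x ∈ G.branch t r w) : G.ReachIn (G.branch t r w) w x := by
  obtain ⟨p, hp⟩ := (mem_branch.1 hx).2
  refine ⟨p, fun z hz => ?_⟩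
  have hwz : G.ReachIn (t.erase r) w z := .of_mem_support hp hz
  exact mem_branch.2 ⟨hwz.mem_right, hwz⟩

lemma connected_induce_branch (hw : w ∈ t.erase r) :
    (G.induce (G.branch t r w : Set V)).Connected :=
  connected_induce_of_forall_reachIn (mem_branch_self hw) fun _ => reachIn_branch

/-- Two neighbours of `r` joined avoiding `r` would close a cycle through `r`. -/
lemma IsAcyclic.disjoint_branch (hG : G.IsAcyclic) (hw : G.Adj r w) (hw' : G.Adj r w')
    (hne : w ≠ w') : Disjoint (G.branch t r w) (G.branch t r w') := by
  refine Finset.disjoint_left.2 fun x hx hx' => hne ?_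
  obtain ⟨p, hp⟩ := (mem_branch.1 hx).2.trans (mem_branch.1 hx').2.symm
  have hrp : r ∉ p.toPath.val.support := fun h =>
    (mem_erase.1 (hp r (p.support_toPath_subset_support h))).1 rfl
  have hpath : (Walk.cons hw p.toPath.val).IsPath := p.toPath.2.cons hrp
  have := congrArg (fun q : G.Path r w' => q.val.support)
    ((hG.subsingleton_path r w').elim ⟨_, hpath⟩ (Path.singleton hw'))
  simp only [Path.singleton, Walk.support_cons, Walk.support_nil, List.cons.injEq, true_and] at this
  rw [← Walk.cons_tail_support] at this
  exact (List.cons.inj this).1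

lemma exists_mem_support_mem_branch {p : G.Walk r x} (hp : p.IsPath)
    (hpt : ∀ z ∈ p.support, z ∈ t) (hx : x ≠ r) :
    ∃ w ∈ p.support, G.Adj r w ∧ x ∈ G.branch t r w := by
  cases p with
  | nil => exact absurd rfl hx
  | @cons _ w _ hrw q =>
    have hrq : r ∉ q.support := (Walk.cons_isPath_iff _ _).1 hp |>.2
    have hq : ∀ z ∈ q.support, z ∈ t.erase r := fun z hz =>
      mem_erase.2 ⟨fun h => hrq (h ▸ hz), hpt z (by simp [hz])⟩
    exact ⟨w, by simp, hrw, mem_branch.2 ⟨hq _ q.end_mem_support, q, hq⟩⟩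

lemma exists_mem_branch (ht : (G.induce (t : Set V)).Connected) (hr : r ∈ t)
    (hx : x ∈ t.erase r) : ∃ w ∈ t.filter (G.Adj r), x ∈ G.branch t r w := by
  obtain ⟨hxr, hxt⟩ := mem_erase.1 hx
  obtain ⟨p, hp, hpt⟩ := exists_isPath_of_connected_induce ht hr hxt
  obtain ⟨w, hwp, hrw, hxw⟩ := exists_mem_support_mem_branch hp hpt hxr
  exact ⟨w, mem_filter.2 ⟨hpt w hwp, hrw⟩, hxw⟩

lemma exists_subset_branch (ht : (G.induce (t : Set V)).Connected) (hr : r ∈ t)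
    {s : Finset V} (hs : (G.induce (s : Set V)).Connected) (hst : s ⊆ t.erase r) :
    ∃ w ∈ t.filter (G.Adj r), s ⊆ G.branch t r w := by
  obtain ⟨x, hx⟩ := hs.nonempty
  obtain ⟨w, hw, hxw⟩ := exists_mem_branch ht hr (hst hx)
  refine ⟨w, hw, fun y hy => ?_⟩
  have hxy : G.ReachIn (t.erase r) x y := (reachIn_of_connected_induce hs hx hy).mono hst
  exact mem_branch.2 ⟨hxy.mem_right, (mem_branch.1 hxw).2.trans hxy⟩

lemma IsAcyclic.mem_of_mem_branch (hG : G.IsAcyclic) {s : Finset V}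
    (hs : (G.induce (s : Set V)).Connected) (hst : s ⊆ t) (hrs : r ∈ s) (hw : G.Adj r w)
    (hxs : x ∈ s) (hxw : x ∈ G.branch t r w) : w ∈ s := by
  obtain ⟨p, hp, hps⟩ := exists_isPath_of_connected_induce hs hrs hxs
  have hxr : x ≠ r := (mem_erase.1 (branch_subset_erase hxw)).1
  obtain ⟨w', hw'p, hrw', hxw'⟩ :=
    exists_mem_support_mem_branch hp (fun z hz => hst (hps z hz)) hxr
  obtain rfl : w' = w := by
    by_contra hne
    exact Finset.disjoint_left.1 (hG.disjoint_branch hrw' hw hne) hxw' hxw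
  exact hps w' hw'p

lemma IsAcyclic.connected_induce_sdiff_branch (hG : G.IsAcyclic)
    (ht : (G.induce (t : Set V)).Connected) (hr : r ∈ t) (hw : G.Adj r w) :
    (G.induce ((t \ G.branch t r w : Finset V) : Set V)).Connected := by
  have hrt : r ∈ t \ G.branch t r w := mem_sdiff.2 ⟨hr, notMem_branch⟩
  refine connected_induce_of_forall_reachIn hrt fun x hx => ?_
  obtain ⟨hxt, hxw⟩ := mem_sdiff.1 hx
  by_cases hxr : x = r
  · rw [hxr]
    exact .refl hrt
  obtain ⟨w', hw', hxw'⟩ := exists_mem_branch ht hr (mem_erase.2 ⟨hxr, hxt⟩)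
  have hne : w' ≠ w := by rintro rfl; exact hxw hxw'
  have hrw' := (mem_filter.1 hw').2
  have hsub : G.branch t r w' ⊆ t \ G.branch t r w := fun y hy =>
    mem_sdiff.2 ⟨branch_subset hy, Finset.disjoint_left.1 (hG.disjoint_branch hrw' hw hne) hy⟩
  have hreach : G.ReachIn (t \ G.branch t r w) r w' :=
    .of_adj hrt (hsub (mem_branch_self (mem_erase_of_mem_filter_adj hw'))) hrw'
  exact hreach.trans ((reachIn_branch hxw').mono hsub)

end Branch

lemma IsAcyclic.eq_of_support_toFinset_eq (hG : G.IsAcyclic) {r x y : V} {p : G.Walk r x}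
    {q : G.Walk r y} (hp : p.IsPath) (hq : q.IsPath)
    (hpq : p.support.toFinset = q.support.toFinset) : x = y := by
  have hyp : y ∈ p.support := by
    simpa [← List.mem_toFinset, hpq] using q.end_mem_support
  have htake : p.takeUntil y hyp = q :=
    congrArg Subtype.val ((hG.subsingleton_path r y).elim ⟨_, hp.takeUntil hyp⟩ ⟨q, hq⟩)
  have hlen : p.length = q.length := by
    have := congrArg Finset.card hpq
    rw [List.toFinset_card_of_nodup hp.support_nodup, List.toFinset_card_of_nodup
      hq.support_nodup, Walk.length_support, Walk.length_support] at this
    omega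
  have hdrop : (p.dropUntil y hyp).length = 0 := by
    have := congrArg Walk.length (p.take_spec hyp)
    rw [Walk.length_append, htake] at this
    omega
  exact (Walk.eq_of_length_eq_zero hdrop).symm

section Counting

variable [Fintype V] {t s : Finset V} {r w : V}

variable (G) in
noncomputable def subtreesIn (t : Finset V) : Finset (Finset V) :=
  (subtrees G).filter (· ⊆ t)

variable (G) in
noncomputable def subtreesThroughIn (t : Finset V) (r : V) : Finset (Finset V) :=
  (subtreesThrough G r).filter (· ⊆ t)

lemma mem_subtreesIn : s ∈ G.subtreesIn t ↔ (G.induce (s : Set V)).Connected ∧ s ⊆ t := by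
  simp only [subtreesIn, subtrees, mem_filter, mem_univ, true_and]
  exact ⟨fun h => ⟨h.1.2, h.2⟩,
    fun h => ⟨⟨coe_nonempty.1 (Set.nonempty_coe_sort.1 h.1.nonempty), h.1⟩, h.2⟩⟩

lemma mem_subtreesThroughIn :
    s ∈ G.subtreesThroughIn t r ↔ r ∈ s ∧ (G.induce (s : Set V)).Connected ∧ s ⊆ t := by
  simp only [subtreesThroughIn, subtreesThrough, mem_filter, mem_univ, true_and, and_assoc]

lemma subtreesIn_univ : G.subtreesIn univ = subtrees G :=
  filter_true_of_mem fun s _ => subset_univ s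

lemma subtreesThroughIn_univ : G.subtreesThroughIn univ r = subtreesThrough G r :=
  filter_true_of_mem fun s _ => subset_univ s

lemma singleton_mem_subtreesThroughIn (hr : r ∈ t) : {r} ∈ G.subtreesThroughIn t r :=
  mem_subtreesThroughIn.2 ⟨mem_singleton_self r, connected_induce_singleton r,
    singleton_subset_iff.2 hr⟩

lemma subtreesIn_singleton : G.subtreesIn {r} = G.subtreesThroughIn {r} r := by
  ext s
  rw [mem_subtreesIn, mem_subtreesThroughIn]
  refine ⟨fun ⟨hs, hsr⟩ => ⟨?_, hs, hsr⟩, fun ⟨_, hs, hsr⟩ => ⟨hs, hsr⟩⟩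
  obtain ⟨x, hx⟩ := hs.nonempty
  simpa [(mem_singleton.1 (hsr hx))] using hx

lemma filter_mem_subtreesIn : (G.subtreesIn t).filter (r ∈ ·) = G.subtreesThroughIn t r := by
  ext s
  simp only [mem_filter, mem_subtreesIn, mem_subtreesThroughIn]
  tauto

lemma filter_notMem_subtreesIn (ht : (G.induce (t : Set V)).Connected) (hr : r ∈ t) :
    (G.subtreesIn t).filter (r ∉ ·) =
      (t.filter (G.Adj r)).biUnion fun w => G.subtreesIn (G.branch t r w) := by
  ext s
  simp only [mem_filter, mem_biUnion, mem_subtreesIn]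
  constructor
  · rintro ⟨⟨hs, hst⟩, hrs⟩
    have hsr : s ⊆ t.erase r := fun x hx => mem_erase.2 ⟨fun h => hrs (h ▸ hx), hst hx⟩
    obtain ⟨w, hw, hsw⟩ := exists_subset_branch ht hr hs hsr
    exact ⟨w, mem_filter.1 hw, hs, hsw⟩
  · rintro ⟨w, -, hs, hsw⟩
    exact ⟨⟨hs, hsw.trans branch_subset⟩, fun hrs => notMem_branch (hsw hrs)⟩

lemma IsAcyclic.pairwiseDisjoint_subtreesIn_branch (hG : G.IsAcyclic) :
    ((t.filter (G.Adj r) : Finset V) : Set V).PairwiseDisjoint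
      fun w => G.subtreesIn (G.branch t r w) := by
  intro w hw w' hw' hne
  refine Finset.disjoint_left.2 fun s hs hs' => ?_
  obtain ⟨x, hx⟩ := (mem_subtreesIn.1 hs).1.nonempty
  exact Finset.disjoint_left.1
    (hG.disjoint_branch (mem_filter.1 hw).2 (mem_filter.1 hw').2 hne)
    ((mem_subtreesIn.1 hs).2 hx) ((mem_subtreesIn.1 hs').2 hx)

/-- The vertex sets of the paths from `r` are distinct subtrees through `r`. -/
lemma IsAcyclic.card_le_card_subtreesThroughIn (hG : G.IsAcyclic)
    (ht : (G.induce (t : Set V)).Connected) (hr : r ∈ t) :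
    t.card ≤ (G.subtreesThroughIn t r).card := by
  choose p hp hpt using fun x (hx : x ∈ t) => exists_isPath_of_connected_induce ht hr hx
  let f : V → Finset V := fun x => if hx : x ∈ t then (p x hx).support.toFinset else ∅
  refine card_le_card_of_injOn f (fun x hx => ?_) (fun x hx y hy hxy => ?_)
  · simp only [f, dif_pos (mem_coe.1 hx)]
    refine mem_subtreesThroughIn.2 ⟨List.mem_toFinset.2 (p x hx).start_mem_support, ?_,
      fun z hz => hpt x hx z (List.mem_toFinset.1 hz)⟩
    rw [List.coe_toFinset]
    exact (p x hx).connected_induce_support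
  · simp only [f, dif_pos (mem_coe.1 hx), dif_pos (mem_coe.1 hy)] at hxy
    exact hG.eq_of_support_toFinset_eq (hp x hx) (hp y hy) hxy

lemma empty_notMem_subtreesThroughIn : ∅ ∉ G.subtreesThroughIn t r :=
  fun h => notMem_empty r (mem_subtreesThroughIn.1 h).1

lemma IsAcyclic.image_union_product_subtreesThroughIn (hG : G.IsAcyclic)
    (ht : (G.induce (t : Set V)).Connected) (hr : r ∈ t) (hw : w ∈ t.filter (G.Adj r)) :
    (G.subtreesThroughIn (t \ G.branch t r w) r ×ˢ
        insert ∅ (G.subtreesThroughIn (G.branch t r w) w)).image (fun p => p.1 ∪ p.2) =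
      G.subtreesThroughIn t r := by
  set b := G.branch t r w
  have hrw := (mem_filter.1 hw).2
  ext s
  simp only [mem_image, mem_product, Prod.exists]
  constructor
  · rintro ⟨d, c, ⟨hd, hc⟩, rfl⟩
    obtain ⟨hrd, hd, hdt⟩ := mem_subtreesThroughIn.1 hd
    replace hdt : d ⊆ t := hdt.trans sdiff_subset
    rcases mem_insert.1 hc with rfl | hc
    · simpa using mem_subtreesThroughIn.2 ⟨hrd, hd, hdt⟩
    obtain ⟨hwc, hc, hcb⟩ := mem_subtreesThroughIn.1 hc
    refine mem_subtreesThroughIn.2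
      ⟨mem_union_left _ hrd, ?_, union_subset hdt (hcb.trans branch_subset)⟩
    rw [coe_union]
    exact connected_induce_union hd.preconnected hc.preconnected hrd hwc hrw
  · intro hs
    obtain ⟨hrs, hs, hst⟩ := mem_subtreesThroughIn.1 hs
    refine ⟨s \ b, s ∩ b, ⟨?_, ?_⟩, sdiff_union_inter s b⟩
    · have hsb : s \ b = s ∩ (t \ b) := by rw [← inter_sdiff_assoc, inter_eq_left.2 hst]
      have hrsb : r ∈ s \ b := mem_sdiff.2 ⟨hrs, notMem_branch⟩
      refine mem_subtreesThroughIn.2 ⟨hrsb, ?_, sdiff_subset_sdiff hst subset_rfl⟩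
      rw [hsb] at hrsb ⊢
      exact hG.connected_induce_inter hs (hG.connected_induce_sdiff_branch ht hr hrw) ⟨r, hrsb⟩
    · rcases (s ∩ b).eq_empty_or_nonempty with h | ⟨x, hx⟩
      · exact h ▸ mem_insert_self _ _
      obtain ⟨hxs, hxb⟩ := mem_inter.1 hx
      refine mem_insert_of_mem (mem_subtreesThroughIn.2 ⟨?_, ?_, inter_subset_right⟩)
      · exact mem_inter.2 ⟨hG.mem_of_mem_branch hs hst hrs hrw hxs hxb,
          mem_branch_self (mem_erase_of_mem_filter_adj hw)⟩
      · exact hG.connected_induce_inter hs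
          (connected_induce_branch (mem_erase_of_mem_filter_adj hw)) ⟨x, hx⟩

lemma coe_product_subtreesThroughIn_subset (b : Finset V) :
    ↑(G.subtreesThroughIn (t \ b) r ×ˢ insert ∅ (G.subtreesThroughIn b w)) ⊆
      {p : Finset V × Finset V | Disjoint p.1 b ∧ p.2 ⊆ b} := by
  intro p hp
  obtain ⟨hd, hc⟩ := mem_product.1 hp
  refine ⟨disjoint_of_subset_left (mem_subtreesThroughIn.1 hd).2.2 sdiff_disjoint, ?_⟩
  rcases mem_insert.1 hc with h | h
  · exact h ▸ empty_subset b
  · exact (mem_subtreesThroughIn.1 h).2.2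

lemma injOn_union_product_subtreesThroughIn (b : Finset V) :
    Set.InjOn (fun p : Finset V × Finset V => p.1 ∪ p.2)
      ↑(G.subtreesThroughIn (t \ b) r ×ˢ insert ∅ (G.subtreesThroughIn b w)) :=
  (injOn_union_of_disjoint_of_subset b).mono (coe_product_subtreesThroughIn_subset b)

lemma IsAcyclic.card_subtreesThroughIn_eq (hG : G.IsAcyclic)
    (ht : (G.induce (t : Set V)).Connected) (hr : r ∈ t) (hw : w ∈ t.filter (G.Adj r)) :
    (G.subtreesThroughIn t r).card = (G.subtreesThroughIn (t \ G.branch t r w) r).card *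
      ((G.subtreesThroughIn (G.branch t r w) w).card + 1) := by
  rw [← hG.image_union_product_subtreesThroughIn ht hr hw,
    card_image_of_injOn (injOn_union_product_subtreesThroughIn _), card_product,
    card_insert_of_notMem empty_notMem_subtreesThroughIn]

lemma IsAcyclic.sum_card_subtreesThroughIn_eq (hG : G.IsAcyclic)
    (ht : (G.induce (t : Set V)).Connected) (hr : r ∈ t) (hw : w ∈ t.filter (G.Adj r)) :
    ∑ s ∈ G.subtreesThroughIn t r, (s.card : ℝ) =
      ((G.subtreesThroughIn (G.branch t r w) w).card + 1) *
          ∑ d ∈ G.subtreesThroughIn (t \ G.branch t r w) r, (d.card : ℝ) +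
        (G.subtreesThroughIn (t \ G.branch t r w) r).card *
          ∑ c ∈ G.subtreesThroughIn (G.branch t r w) w, (c.card : ℝ) := by
  set D := G.subtreesThroughIn (t \ G.branch t r w) r
  set C := G.subtreesThroughIn (G.branch t r w) w
  have hunion : ∀ d ∈ D, ∀ c ∈ insert ∅ C, ((d ∪ c).card : ℝ) = d.card + c.card := by
    intro d hd c hc
    have := coe_product_subtreesThroughIn_subset (G := G) (G.branch t r w) (mk_mem_product hd hc)
    rw [card_union_of_disjoint (disjoint_of_subset_right this.2 this.1), Nat.cast_add]
  rw [← hG.image_union_product_subtreesThroughIn ht hr hw,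
    sum_image (injOn_union_product_subtreesThroughIn _), sum_product]
  calc ∑ d ∈ D, ∑ c ∈ insert ∅ C, (((d, c).1 ∪ (d, c).2).card : ℝ)
      = ∑ d ∈ D, ((C.card + 1) * d.card + ∑ c ∈ C, (c.card : ℝ)) := by
        refine sum_congr rfl fun d hd => ?_
        rw [sum_congr rfl (hunion d hd), sum_add_distrib, sum_const, sum_insert
          empty_notMem_subtreesThroughIn, card_insert_of_notMem empty_notMem_subtreesThroughIn,
          card_empty, nsmul_eq_mul]
        push_cast
        ring
    _ = _ := by rw [sum_add_distrib, ← mul_sum, sum_const, nsmul_eq_mul]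

theorem IsAcyclic.meanOrder_subtreesThroughIn_branch_lt (hG : G.IsAcyclic)
    (ht : (G.induce (t : Set V)).Connected) (hr : r ∈ t) (hw : w ∈ t.filter (G.Adj r)) :
    meanOrder (G.subtreesThroughIn (G.branch t r w) w) < meanOrder (G.subtreesThroughIn t r) := by
  set b := G.branch t r w
  set C := G.subtreesThroughIn b w
  set D := G.subtreesThroughIn (t \ b) r
  have hwb : w ∈ b := mem_branch_self (mem_erase_of_mem_filter_adj hw)
  have hC : (1 : ℝ) ≤ #C := by
    exact_mod_cast card_pos.2 ⟨_, singleton_mem_subtreesThroughIn hwb⟩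
  have hD : (1 : ℝ) ≤ #D := by
    exact_mod_cast card_pos.2
      ⟨_, singleton_mem_subtreesThroughIn (mem_sdiff.2 ⟨hr, notMem_branch⟩)⟩
  have hRC : ∑ c ∈ C, (c.card : ℝ) ≤ #C * #C := by
    have hbC : (#b : ℝ) ≤ #C := by
      exact_mod_cast hG.card_le_card_subtreesThroughIn
        (connected_induce_branch (mem_erase_of_mem_filter_adj hw)) hwb
    calc ∑ c ∈ C, (c.card : ℝ) ≤ ∑ c ∈ C, (#b : ℝ) := sum_le_sum fun c hc => by
          exact_mod_cast card_le_card (mem_subtreesThroughIn.1 hc).2.2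
      _ ≤ #C * #C := by rw [sum_const, nsmul_eq_mul]; gcongr
  have hRD : (#D : ℝ) ≤ ∑ d ∈ D, (d.card : ℝ) := by
    rw [← nsmul_one, ← sum_const]
    exact sum_le_sum fun d hd => by
      exact_mod_cast card_pos.2 ⟨r, (mem_subtreesThroughIn.1 hd).1⟩
  rw [meanOrder, meanOrder, hG.sum_card_subtreesThroughIn_eq ht hr hw,
    hG.card_subtreesThroughIn_eq ht hr hw]
  push_cast
  rw [div_lt_div_iff₀ (by linarith) (by nlinarith)]
  nlinarith [mul_le_mul_of_nonneg_left hRD (by positivity : (0 : ℝ) ≤ #C * (#C + 1))]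

theorem IsAcyclic.meanOrder_subtreesIn_lt (hG : G.IsAcyclic)
    (ht : (G.induce (t : Set V)).Connected) (hr : r ∈ t) (ht2 : 2 ≤ #t)
    (ih : ∀ w ∈ t.filter (G.Adj r), meanOrder (G.subtreesIn (G.branch t r w)) ≤
      meanOrder (G.subtreesThroughIn (G.branch t r w) w)) :
    meanOrder (G.subtreesIn t) < meanOrder (G.subtreesThroughIn t r) := by
  obtain ⟨x, hxt, hxr⟩ := exists_mem_ne ht2 r
  obtain ⟨w₀, hw₀, -⟩ := exists_mem_branch ht hr (mem_erase.2 ⟨hxr, hxt⟩)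
  have hbranch : ∀ w ∈ t.filter (G.Adj r), (G.subtreesIn (G.branch t r w)).Nonempty :=
    fun w hw => ⟨_, mem_subtreesIn.2 ⟨connected_induce_singleton w,
      singleton_subset_iff.2 (mem_branch_self (mem_erase_of_mem_filter_adj hw))⟩⟩
  have havoid : meanOrder ((G.subtreesIn t).filter (r ∉ ·)) <
      meanOrder (G.subtreesThroughIn t r) := by
    rw [filter_notMem_subtreesIn ht hr]
    exact sum_div_card_biUnion_lt hG.pairwiseDisjoint_subtreesIn_branch ⟨w₀, hw₀⟩ hbranch
      fun w hw => (ih w hw).trans_lt (hG.meanOrder_subtreesThroughIn_branch_lt ht hr hw)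
  have hsplit :
      G.subtreesIn t = G.subtreesThroughIn t r ∪ (G.subtreesIn t).filter (r ∉ ·) := by
    rw [← filter_mem_subtreesIn, filter_union_filter_not_eq]
  have hdisj : Disjoint (G.subtreesThroughIn t r) ((G.subtreesIn t).filter (r ∉ ·)) := by
    rw [← filter_mem_subtreesIn]
    exact disjoint_filter_filter_not _ _ _
  have hx : {x} ∈ (G.subtreesIn t).filter (r ∉ ·) :=
    mem_filter.2 ⟨mem_subtreesIn.2 ⟨connected_induce_singleton x, singleton_subset_iff.2 hxt⟩,
      by simpa using hxr.symm⟩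
  rw [meanOrder, hsplit]
  exact sum_div_card_union_lt hdisj ⟨_, hx⟩ ⟨_, singleton_mem_subtreesThroughIn hr⟩ havoid

theorem IsAcyclic.meanOrder_subtreesIn_le (hG : G.IsAcyclic)
    (ht : (G.induce (t : Set V)).Connected) (hr : r ∈ t) :
    meanOrder (G.subtreesIn t) ≤ meanOrder (G.subtreesThroughIn t r) := by
  induction t using Finset.strongInduction generalizing r with
  | H t ih =>
  rcases (one_le_card.2 ⟨r, hr⟩).eq_or_lt with h1 | h2
  · obtain ⟨a, rfl⟩ := card_eq_one.1 h1.symm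
    rw [mem_singleton.1 hr, subtreesIn_singleton]
  · refine (hG.meanOrder_subtreesIn_lt ht hr h2 fun w hw => ?_).le
    have hw' := mem_erase_of_mem_filter_adj hw
    exact ih _ (branch_subset_erase.trans_ssubset (erase_ssubset hr))
      (connected_induce_branch hw') (mem_branch_self hw')

end Counting

end SimpleGraph

/-- Every tree `T` on `n ≥ 2` vertices and every vertex `v` satisfy `μ_T(v) > μ_T`. -/
theorem stmt10 {V : Type*} [Fintype V] (G : SimpleGraph V) (hG : G.IsTree)
    (hn : 2 ≤ Fintype.card V) (v : V) :
    (∑ s ∈ subtrees G, (s.card : ℝ)) / (subtrees G).card <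
      (∑ s ∈ subtreesThrough G v, (s.card : ℝ)) / (subtreesThrough G v).card := by
  have hconn : (G.induce ((Finset.univ : Finset V) : Set V)).Connected := by
    rw [Finset.coe_univ]
    exact (SimpleGraph.induceUnivIso G).connected_iff.2 hG.connected
  have h := hG.isAcyclic.meanOrder_subtreesIn_lt hconn (Finset.mem_univ v)
    (by rwa [Finset.card_univ]) fun w hw =>
      have hw' := SimpleGraph.mem_erase_of_mem_filter_adj hw
      hG.isAcyclic.meanOrder_subtreesIn_le (SimpleGraph.connected_induce_branch hw')
        (SimpleGraph.mem_branch_self hw')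
  rwa [SimpleGraph.subtreesIn_univ, SimpleGraph.subtreesThroughIn_univ] at h
end

section
/- For a double-broom consisting of a path with n − 2s vertices and s pendant leaves attached at each endpoint, the sum of the orders of all subtrees equals 2^{2s}(n − s) + 2^s(n − s)(n − 2s − 1) + C(n−2s, 3) + 2s. -/
open scoped Classical

/-- The double-broom on `n` vertices: vertices `0,…,n−2s−1` form a path, vertices
`n−2s,…,n−s−1` are leaves attached to the endpoint `0` of the path, and vertices
`n−s,…,n−1` are leaves attached to the other endpoint `n−2s−1`. -/
def doubleBroom (n s : ℕ) : SimpleGraph (Fin n) :=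
  SimpleGraph.fromRel (fun i j =>
    (i.val + 1 = j.val ∧ j.val < n - 2 * s) ∨
    (i.val = 0 ∧ n - 2 * s ≤ j.val ∧ j.val < n - 2 * s + s) ∨
    (i.val = n - 2 * s - 1 ∧ n - 2 * s + s ≤ j.val))

/-!
Put `p = n - 2s`. A subtree meeting the path meets it in an interval `[a, b]`, and it may
contain an arbitrary set of the leaves at vertex `0` if `a = 0`, an arbitrary set of the leaves
at vertex `p - 1` if `b = p - 1`, and no other leaves; the remaining subtrees are the `2s`
single leaves. Summing the orders over this parametrisation, using
`∑_{A ⊆ [s]} |A| = s 2^(s-1)`, the four cases (`a = 0` or not, `b = p - 1` or not) contribute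
`4^s (p + s)`, twice `2^s (p + s)(p - 1) / 2`, and `C(p, 3)`.
-/

open Finset

theorem Finset.sum_card_powerset_mul_two {α : Type*} (X : Finset α) :
    (∑ A ∈ X.powerset, #A) * 2 = #X * 2 ^ #X := by
  have hcompl : ∑ A ∈ X.powerset, #A = ∑ A ∈ X.powerset, #(X \ A) :=
    sum_nbij' (X \ ·) (X \ ·) (by simp) (by simp)
      (fun A hA => sdiff_sdiff_eq_self (mem_powerset.1 hA))
      (fun A hA => sdiff_sdiff_eq_self (mem_powerset.1 hA))
      (fun A hA => by rw [sdiff_sdiff_eq_self (mem_powerset.1 hA)])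
  calc (∑ A ∈ X.powerset, #A) * 2 = ∑ A ∈ X.powerset, (#(X \ A) + #A) := by
        rw [mul_two, sum_add_distrib, ← hcompl]
    _ = ∑ A ∈ X.powerset, #X :=
        sum_congr rfl fun A hA => card_sdiff_add_card_eq_card (mem_powerset.1 hA)
    _ = #X * 2 ^ #X := by simp [mul_comm]

theorem Finset.sum_product_add_card {α : Type*} (m : ℕ) (𝒳 𝒴 : Finset (Finset α)) :
    ∑ AB ∈ 𝒳 ×ˢ 𝒴, (m + #AB.1 + #AB.2) =
      #𝒳 * #𝒴 * m + #𝒴 * ∑ A ∈ 𝒳, #A + #𝒳 * ∑ B ∈ 𝒴, #B := by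
  rw [sum_product]
  simp only [sum_add_distrib, sum_const, smul_eq_mul, ← mul_sum]
  ring

theorem Finset.sum_range_add_one_eq_choose_two (r : ℕ) :
    ∑ a ∈ range r, (a + 1) = (r + 1).choose 2 := by
  induction r with
  | zero => rfl
  | succ r ih =>
    rw [sum_range_succ, ih, Nat.choose_succ_succ' (r + 1) 1, Nat.choose_one_right, add_comm]

theorem Finset.sum_range_sub_eq_choose_two (r : ℕ) :
    ∑ a ∈ range r, (r - a) = (r + 1).choose 2 := by
  induction r with
  | zero => rfl
  | succ r ih =>
    rw [sum_range_succ', Nat.choose_succ_succ' (r + 1) 1, Nat.choose_one_right, ← ih]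
    simp only [Nat.add_sub_add_right, Nat.sub_zero]
    ring

theorem Finset.sum_range_sum_range_sub_eq_choose_three (r : ℕ) :
    ∑ b ∈ range r, ∑ a ∈ range b, (b - a) = (r + 1).choose 3 := by
  induction r with
  | zero => rfl
  | succ r ih =>
    rw [sum_range_succ, ih, sum_range_sub_eq_choose_two, Nat.choose_succ_succ' (r + 1) 2, add_comm]

namespace SimpleGraph
variable {V : Type*} {G : SimpleGraph V}

theorem Connected.exists_adj_across_of_induce {s : Set V} (h : (G.induce s).Connected)
    {u v : V} (hu : u ∈ s) (hv : v ∈ s) {S : Set V} (huS : u ∈ S) (hvS : v ∉ S) :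
    ∃ x ∈ s, ∃ y ∈ s, G.Adj x y ∧ x ∈ S ∧ y ∉ S := by
  obtain ⟨w⟩ := h.preconnected ⟨u, hu⟩ ⟨v, hv⟩
  obtain ⟨d, -, hd₁, hd₂⟩ := w.exists_boundary_dart (Subtype.val ⁻¹' S) huS hvS
  exact ⟨d.fst, d.fst.2, d.snd, d.snd.2, d.adj, hd₁, hd₂⟩

theorem induce_connected_of_exists_adj_lt {s : Set V} {r : V} (hr : r ∈ s) (f : V → ℕ)
    (h : ∀ v ∈ s, v ≠ r → ∃ w ∈ s, G.Adj v w ∧ f w < f v) : (G.induce s).Connected := by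
  rw [connected_iff_exists_forall_reachable]
  refine ⟨⟨r, hr⟩, fun v => ?_⟩
  induction hk : f v using Nat.strong_induction_on generalizing v with
  | _ k ih =>
  by_cases hvr : v.1 = r
  · rw [show v = ⟨r, hr⟩ from Subtype.ext hvr]
  obtain ⟨w, hw, hvw, hlt⟩ := h v v.2 hvr
  exact (ih _ (hk ▸ hlt) ⟨w, hw⟩ rfl).trans (Adj.reachable (G := G.induce s) hvw.symm)

end SimpleGraph

namespace DoubleBroom
variable {p s : ℕ}

def edgeRel (p s i j : ℕ) : Prop :=
  (i + 1 = j ∧ j < p) ∨ (i = 0 ∧ p ≤ j ∧ j < p + s) ∨ (i = p - 1 ∧ p + s ≤ j)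

theorem adj_iff {x y : Fin (p + 2 * s)} :
    (doubleBroom (p + 2 * s) s).Adj x y ↔
      (x : ℕ) ≠ y ∧ (edgeRel p s x y ∨ edgeRel p s y x) := by
  simp only [doubleBroom, SimpleGraph.fromRel_adj, edgeRel, Nat.add_sub_cancel, ne_eq,
    Fin.ext_iff]

def leftLeaves (p s : ℕ) : Finset ℕ := Ico p (p + s)

def rightLeaves (p s : ℕ) : Finset ℕ := Ico (p + s) (p + 2 * s)

/-- The leaf sets that can accompany a path interval at one end of the path, where `atEnd` says
whether the interval reaches that end. -/
def leafChoices (L : Finset ℕ) (atEnd : Prop) [Decidable atEnd] : Finset (Finset ℕ) :=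
  if atEnd then L.powerset else {∅}

theorem mem_leafChoices {L A : Finset ℕ} {atEnd : Prop} [Decidable atEnd] :
    A ∈ leafChoices L atEnd ↔ A ⊆ L ∧ (A.Nonempty → atEnd) := by
  by_cases h : atEnd
  · simp [leafChoices, h]
  · simp only [leafChoices, h, if_false, mem_singleton, imp_false, not_nonempty_iff_eq_empty]
    exact ⟨fun hA => ⟨hA ▸ empty_subset L, hA⟩, And.right⟩

theorem card_leafChoices (L : Finset ℕ) (atEnd : Prop) [Decidable atEnd] :
    #(leafChoices L atEnd) = if atEnd then 2 ^ #L else 1 := by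
  unfold leafChoices; split_ifs <;> simp

theorem sum_card_leafChoices (L : Finset ℕ) (atEnd : Prop) [Decidable atEnd] :
    ∑ A ∈ leafChoices L atEnd, #A = if atEnd then ∑ A ∈ L.powerset, #A else 0 := by
  unfold leafChoices; split_ifs <;> simp

def branchParams (p s : ℕ) : Finset (Σ _ : ℕ, Σ _ : ℕ, Finset ℕ × Finset ℕ) :=
  (range p).sigma fun a => (Ico a p).sigma fun b =>
    leafChoices (leftLeaves p s) (a = 0) ×ˢ leafChoices (rightLeaves p s) (b = p - 1)

def branchSet : (Σ _ : ℕ, Σ _ : ℕ, Finset ℕ × Finset ℕ) → Finset ℕ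
  | ⟨a, b, A, B⟩ => Icc a b ∪ A ∪ B

theorem mem_branchParams {a b : ℕ} {A B : Finset ℕ} :
    ⟨a, b, A, B⟩ ∈ branchParams p s ↔ (a ≤ b ∧ b < p) ∧
      (A ⊆ leftLeaves p s ∧ (A.Nonempty → a = 0)) ∧
      (B ⊆ rightLeaves p s ∧ (B.Nonempty → b = p - 1)) := by
  simp only [branchParams, mem_sigma, mem_range, mem_Ico, mem_product, mem_leafChoices]
  exact ⟨And.right, fun h => ⟨h.1.1.trans_lt h.1.2, h⟩⟩

theorem lt_of_mem_branchSet {q} (hq : q ∈ branchParams p s) :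
    ∀ m ∈ branchSet q, m < p + 2 * s := by
  obtain ⟨a, b, A, B⟩ := q
  obtain ⟨⟨-, hbp⟩, ⟨hA, -⟩, ⟨hB, -⟩⟩ := mem_branchParams.1 hq
  intro m hm
  simp only [branchSet, mem_union, mem_Icc] at hm
  rcases hm with (hm | hm) | hm
  · omega
  · have := mem_Ico.1 (hA hm); omega
  · exact (mem_Ico.1 (hB hm)).2

theorem branchSet_decompose {a b : ℕ} {A B : Finset ℕ} (h : ⟨a, b, A, B⟩ ∈ branchParams p s) :
    (branchSet ⟨a, b, A, B⟩).filter (· < p) = Icc a b ∧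
      branchSet ⟨a, b, A, B⟩ ∩ leftLeaves p s = A ∧
      branchSet ⟨a, b, A, B⟩ ∩ rightLeaves p s = B := by
  obtain ⟨⟨-, hbp⟩, ⟨hA, -⟩, ⟨hB, -⟩⟩ := mem_branchParams.1 h
  have hA' : ∀ m ∈ A, p ≤ m ∧ m < p + s := fun m hm => mem_Ico.1 (hA hm)
  have hB' : ∀ m ∈ B, p + s ≤ m ∧ m < p + 2 * s := fun m hm => mem_Ico.1 (hB hm)
  refine ⟨?_, ?_, ?_⟩ <;> ext m <;>
    simp only [branchSet, leftLeaves, rightLeaves, mem_filter, mem_inter, mem_union, mem_Icc,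
      mem_Ico] <;> grind

theorem branchSet_injOn : Set.InjOn branchSet (branchParams p s : Set _) := by
  rintro ⟨a, b, A, B⟩ h ⟨a', b', A', B'⟩ h' he
  obtain ⟨hI, hA, hB⟩ := branchSet_decompose h
  obtain ⟨hI', hA', hB'⟩ := branchSet_decompose h'
  rw [he] at hI hA hB
  have hIcc : Set.Icc a b = Set.Icc a' b' := by rw [← coe_Icc, ← coe_Icc, ← hI, ← hI']
  obtain ⟨rfl, rfl⟩ := (Set.Icc_eq_Icc_iff (mem_branchParams.1 h).1.1).1 hIcc
  obtain rfl : A = A' := hA.symm.trans hA'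
  obtain rfl : B = B' := hB.symm.trans hB'
  rfl

theorem card_branchSet {a b : ℕ} {A B : Finset ℕ} (h : ⟨a, b, A, B⟩ ∈ branchParams p s) :
    #(branchSet ⟨a, b, A, B⟩) = b + 1 - a + #A + #B := by
  obtain ⟨⟨-, hbp⟩, ⟨hA, -⟩, ⟨hB, -⟩⟩ := mem_branchParams.1 h
  have hA' : ∀ m ∈ A, p ≤ m ∧ m < p + s := fun m hm => mem_Ico.1 (hA hm)
  have hB' : ∀ m ∈ B, p + s ≤ m ∧ m < p + 2 * s := fun m hm => mem_Ico.1 (hB hm)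
  rw [branchSet, card_union_of_disjoint, card_union_of_disjoint, Nat.card_Icc]
  · exact disjoint_left.2 fun m hm hmA => by grind
  · exact disjoint_left.2 fun m hm hmB => by grind

theorem sum_card_branchSet_eq_sum_range (p s : ℕ) :
    ∑ q ∈ branchParams p s, #(branchSet q) =
      ∑ b ∈ range p, ∑ a ∈ range (b + 1),
        ∑ AB ∈ leafChoices (leftLeaves p s) (a = 0) ×ˢ leafChoices (rightLeaves p s) (b = p - 1),
          (b + 1 - a + #AB.1 + #AB.2) := by
  calc ∑ q ∈ branchParams p s, #(branchSet q)
      = ∑ a ∈ range p, ∑ b ∈ Ico a p,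
        ∑ AB ∈ leafChoices (leftLeaves p s) (a = 0) ×ˢ leafChoices (rightLeaves p s) (b = p - 1),
          (b + 1 - a + #AB.1 + #AB.2) := by
        rw [branchParams, sum_sigma]
        refine sum_congr rfl fun a ha => ?_
        rw [sum_sigma]
        exact sum_congr rfl fun b hb => sum_congr rfl fun AB hAB =>
          card_branchSet (mem_sigma.2 ⟨ha, mem_sigma.2 ⟨hb, hAB⟩⟩)
    _ = _ := sum_comm' fun a b => by simp only [mem_range, mem_Ico]; omega

theorem sum_card_branchSet (hp : 0 < p) :
    ∑ q ∈ branchParams p s, #(branchSet q) =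
      2 ^ (2 * s) * (p + s) + 2 ^ s * (p + s) * (p - 1) + p.choose 3 := by
  obtain ⟨r, rfl⟩ : ∃ r, p = r + 1 := ⟨p - 1, by omega⟩
  have hL : #(leftLeaves (r + 1) s) = s := by simp [leftLeaves]
  have hR : #(rightLeaves (r + 1) s) = s := by simp [rightLeaves]; omega
  have hσL := sum_card_powerset_mul_two (leftLeaves (r + 1) s)
  have hσR := sum_card_powerset_mul_two (rightLeaves (r + 1) s)
  rw [sum_card_branchSet_eq_sum_range]
  simp only [sum_product_add_card, card_leafChoices, sum_card_leafChoices, Nat.add_sub_cancel,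
    hL, hR] at hσL hσR ⊢
  set σL := ∑ A ∈ (leftLeaves (r + 1) s).powerset, #A
  set σR := ∑ B ∈ (rightLeaves (r + 1) s).powerset, #B
  have hinner : ∀ b ∈ range r, ∑ a ∈ range (b + 1),
      ((if a = 0 then 2 ^ s else 1) * (if b = r then 2 ^ s else 1) * (b + 1 - a) +
        (if b = r then 2 ^ s else 1) * (if a = 0 then σL else 0) +
        (if a = 0 then 2 ^ s else 1) * (if b = r then σR else 0)) =
      2 ^ s * (b + 1) + σL + ∑ a ∈ range b, (b - a) := by
    intro b hb
    rw [sum_range_succ', add_comm]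
    simp [(mem_range.1 hb).ne]
  rw [sum_range_succ, sum_congr rfl hinner, sum_range_succ']
  simp only [one_mul, mul_zero, add_zero, if_true, Nat.add_sub_add_right, add_eq_zero,
    one_ne_zero, and_false, if_false, Nat.sub_zero]
  rw [sum_add_distrib, sum_add_distrib, sum_add_distrib, ← mul_sum, ← mul_sum, sum_const,
    sum_const, card_range, smul_eq_mul, smul_eq_mul, sum_range_add_one_eq_choose_two,
    sum_range_sub_eq_choose_two, sum_range_sum_range_sub_eq_choose_three]
  have hT : (r + 1).choose 2 * 2 = (r + 1) * r := by
    simpa using (Nat.add_one_mul_choose_eq r 1).symm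
  qify at hσL hσR hT ⊢
  linear_combination (2 ^ s : ℚ) * hT + ((r : ℚ) + 2 ^ s) / 2 * (hσL + hσR)

variable {t : Finset (Fin (p + 2 * s))}

theorem Icc_subset_of_connected
    (ht : ((doubleBroom (p + 2 * s) s).induce (t : Set (Fin (p + 2 * s)))).Connected)
    {u v : ℕ} (hu : u ∈ t.map Fin.valEmbedding) (hv : v ∈ t.map Fin.valEmbedding) (hvp : v < p) :
    Icc u v ⊆ t.map Fin.valEmbedding := by
  intro k hk
  by_contra hkt
  obtain ⟨u', hu', rfl⟩ := mem_map.1 hu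
  obtain ⟨v', hv', rfl⟩ := mem_map.1 hv
  simp only [mem_Icc, Fin.valEmbedding_apply] at hk hvp
  have hu'k : (u' : ℕ) ≠ k := fun h => hkt (h ▸ hu)
  have hv'k : (v' : ℕ) ≠ k := fun h => hkt (h ▸ hv)
  obtain ⟨x, hx, y, hy, hxy, hxS, hyS⟩ := ht.exists_adj_across_of_induce hu' hv'
    (S := {z | (z : ℕ) < k ∨ (p ≤ z ∧ (z : ℕ) < p + s)})
    (by simp only [Set.mem_ofPred_eq]; omega) (by simp only [Set.mem_ofPred_eq]; omega)
  have hxk : (x : ℕ) ≠ k := fun h => hkt (h ▸ mem_map_of_mem _ hx)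
  have hyk : (y : ℕ) ≠ k := fun h => hkt (h ▸ mem_map_of_mem _ hy)
  simp only [Set.mem_ofPred_eq, adj_iff, edgeRel] at hxS hyS hxy
  omega

theorem exists_attach_mem_of_connected (hp : 0 < p)
    (ht : ((doubleBroom (p + 2 * s) s).induce (t : Set (Fin (p + 2 * s)))).Connected)
    {w v : ℕ} (hw : w ∈ t.map Fin.valEmbedding) (hv : v ∈ t.map Fin.valEmbedding) (hvw : v ≠ w)
    (hpw : p ≤ w) :
    ∃ x ∈ t.map Fin.valEmbedding, (w < p + s ∧ x = 0) ∨ (p + s ≤ w ∧ x = p - 1) := by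
  obtain ⟨w', hw', rfl⟩ := mem_map.1 hw
  obtain ⟨v', hv', rfl⟩ := mem_map.1 hv
  obtain ⟨x, hx, y, hy, hxy, hxS, hyS⟩ := ht.exists_adj_across_of_induce hw' hv'
    (S := {w'}) rfl (by simpa [Fin.ext_iff] using hvw)
  refine ⟨y, mem_map_of_mem _ hy, ?_⟩
  simp only [Set.mem_singleton_iff, Fin.ext_iff, adj_iff, edgeRel,
    Fin.valEmbedding_apply] at hxS hyS hxy hpw ⊢
  omega

theorem exists_branchSet_eq_of_connected
    (ht : ((doubleBroom (p + 2 * s) s).induce (t : Set (Fin (p + 2 * s)))).Connected)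
    (hpath : ∃ v ∈ t, (v : ℕ) < p) :
    ∃ q ∈ branchParams p s, branchSet q = t.map Fin.valEmbedding := by
  set N := t.map Fin.valEmbedding
  have hN : ∀ m ∈ N, m < p + 2 * s := by simp [N]
  obtain ⟨v, hv, hvp⟩ := hpath
  have hP : (N.filter (· < p)).Nonempty := ⟨v, mem_filter.2 ⟨mem_map_of_mem _ hv, hvp⟩⟩
  set a := (N.filter (· < p)).min' hP
  set b := (N.filter (· < p)).max' hP
  obtain ⟨haN, hap⟩ := mem_filter.1 (min'_mem _ hP)
  obtain ⟨hbN, hbp⟩ := mem_filter.1 (max'_mem _ hP)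
  have ha : ∀ m ∈ N, m < p → a ≤ m := fun m hm hmp => min'_le _ _ (mem_filter.2 ⟨hm, hmp⟩)
  have hb : ∀ m ∈ N, m < p → m ≤ b := fun m hm hmp => le_max' _ _ (mem_filter.2 ⟨hm, hmp⟩)
  refine ⟨⟨a, b, N ∩ leftLeaves p s, N ∩ rightLeaves p s⟩,
    mem_branchParams.2 ⟨⟨ha b hbN hbp, hbp⟩, ⟨inter_subset_right, ?_⟩, ⟨inter_subset_right, ?_⟩⟩,
    ?_⟩
  · rintro ⟨w, hw⟩
    obtain ⟨hwN, hwL⟩ := mem_inter.1 hw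
    rw [leftLeaves, mem_Ico] at hwL
    obtain ⟨x, hx, hxw⟩ := exists_attach_mem_of_connected (by omega) ht hwN haN (by omega) hwL.1
    have := ha x hx (by omega)
    omega
  · rintro ⟨w, hw⟩
    obtain ⟨hwN, hwR⟩ := mem_inter.1 hw
    rw [rightLeaves, mem_Ico] at hwR
    obtain ⟨x, hx, hxw⟩ :=
      exists_attach_mem_of_connected (by omega) ht hwN hbN (by omega) (by omega)
    have := hb x hx (by omega)
    omega
  · refine Subset.antisymm (union_subset (union_subset (Icc_subset_of_connected ht haN hbN hbp)
      inter_subset_left) inter_subset_left) fun m hm => ?_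
    have := hN m hm
    simp only [branchSet, mem_union, mem_inter, leftLeaves, rightLeaves, mem_Ico]
    by_cases hmp : m < p
    · exact Or.inl (Or.inl (mem_Icc.2 ⟨ha m hm hmp, hb m hm hmp⟩))
    · rcases Nat.lt_or_ge m (p + s) with hms | hms
      · exact Or.inl (Or.inr ⟨hm, by omega, hms⟩)
      · exact Or.inr ⟨hm, hms, this⟩

theorem connected_induce_attachFin_branchSet {q} (hq : q ∈ branchParams p s) :
    ((doubleBroom (p + 2 * s) s).induce
      ((branchSet q).attachFin (lt_of_mem_branchSet hq) : Set (Fin (p + 2 * s)))).Connected := by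
  obtain ⟨a, b, A, B⟩ := q
  obtain ⟨⟨hab, hbp⟩, ⟨hA, hA0⟩, ⟨hB, hB1⟩⟩ := mem_branchParams.1 hq
  have hIcc : ∀ m (hm : m < p + 2 * s), a ≤ m → m ≤ b →
      (⟨m, hm⟩ : Fin (p + 2 * s)) ∈ (branchSet ⟨a, b, A, B⟩).attachFin (lt_of_mem_branchSet hq) :=
    fun m _ ham hmb => by simp [mem_attachFin, branchSet, ham, hmb]
  -- every vertex other than `a` has a smaller neighbour in the path interval `[a, b]`
  refine SimpleGraph.induce_connected_of_exists_adj_lt (hIcc a (by omega) le_rfl hab) Fin.val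
    fun v hv hva => ?_
  obtain ⟨m, ham, hmb, hadj, hmv⟩ : ∃ m, a ≤ m ∧ m ≤ b ∧
      ((v : ℕ) ≠ m ∧ (edgeRel p s v m ∨ edgeRel p s m v)) ∧ m < v := by
    simp only [mem_coe, mem_attachFin, branchSet, mem_union, mem_Icc] at hv
    simp only [ne_eq, Fin.ext_iff] at hva
    rcases hv with (hv | hv) | hv
    · exact ⟨v - 1, by omega, by omega, by simp only [edgeRel]; omega, by omega⟩
    · have := mem_Ico.1 (hA hv)
      have := hA0 ⟨v, hv⟩
      exact ⟨a, le_rfl, hab, by simp only [edgeRel]; omega, by omega⟩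
    · have := mem_Ico.1 (hB hv)
      have := hB1 ⟨v, hv⟩
      exact ⟨b, hab, le_rfl, by simp only [edgeRel]; omega, by omega⟩
  exact ⟨⟨m, by omega⟩, hIcc m _ ham hmb, adj_iff.2 hadj, hmv⟩

theorem sum_card_subtrees_meeting_path :
    ∑ t ∈ (subtrees (doubleBroom (p + 2 * s) s)).filter
        (fun t => ∃ v : Fin (p + 2 * s), v ∈ t ∧ (v : ℕ) < p), #t =
      ∑ q ∈ branchParams p s, #(branchSet q) := by
  refine (sum_bij (fun q hq => (branchSet q).attachFin (lt_of_mem_branchSet hq))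
    (fun q hq => ?_) (fun q hq q' hq' he => ?_) (fun t ht => ?_) (fun q hq => ?_)).symm
  · obtain ⟨a, b, A, B⟩ := q
    have hab := (mem_branchParams.1 hq).1
    have ha : (⟨a, by omega⟩ : Fin (p + 2 * s)) ∈
        (branchSet ⟨a, b, A, B⟩).attachFin (lt_of_mem_branchSet hq) := by
      simp [mem_attachFin, branchSet, hab.1]
    simp only [subtrees, mem_filter, mem_univ, true_and]
    exact ⟨⟨⟨_, ha⟩, connected_induce_attachFin_branchSet hq⟩, _, ha, by simp; omega⟩
  · apply branchSet_injOn hq hq'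
    rw [← map_valEmbedding_attachFin (lt_of_mem_branchSet hq), he, map_valEmbedding_attachFin]
  · simp only [subtrees, mem_filter, mem_univ, true_and] at ht
    obtain ⟨q, hq, hqt⟩ := exists_branchSet_eq_of_connected ht.1.2 ht.2
    exact ⟨q, hq, map_injective Fin.valEmbedding (by rw [map_valEmbedding_attachFin, hqt])⟩
  · exact (card_attachFin _ _).symm

theorem sum_card_subtrees_avoiding_path (hp : 0 < p) :
    ∑ t ∈ (subtrees (doubleBroom (p + 2 * s) s)).filter
        (fun t => ¬∃ v : Fin (p + 2 * s), v ∈ t ∧ (v : ℕ) < p), #t =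
      2 * s := by
  calc _ = ∑ ℓ ∈ Ico p (p + 2 * s), 1 := by
        refine (sum_bij (fun ℓ hℓ => {⟨ℓ, (mem_Ico.1 hℓ).2⟩})
          (fun ℓ hℓ => ?_) (fun ℓ _ ℓ' _ he => ?_) (fun t ht => ?_) (fun ℓ _ => ?_)).symm
        · have := mem_Ico.1 hℓ
          simp only [subtrees, mem_filter, mem_univ, true_and, singleton_nonempty, mem_singleton,
            exists_eq_left, not_lt]
          refine ⟨SimpleGraph.induce_connected_of_exists_adj_lt (mem_singleton_self _) Fin.val
            fun v hv hne => absurd (mem_singleton.1 hv) hne, this.1⟩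
        · simpa using he
        · simp only [subtrees, mem_filter, mem_univ, true_and, not_exists, not_and, not_lt] at ht
          obtain ⟨⟨⟨w, hw⟩, hconn⟩, hleaf⟩ := ht
          refine ⟨w, mem_Ico.2 ⟨hleaf w hw, w.2⟩,
            (eq_singleton_iff_unique_mem.2 ⟨hw, fun v hv => ?_⟩).symm⟩
          by_contra hvw
          obtain ⟨x, hx, hxw⟩ := exists_attach_mem_of_connected hp hconn
            (mem_map_of_mem Fin.valEmbedding hw) (mem_map_of_mem Fin.valEmbedding hv)
            (by simpa [Fin.ext_iff] using hvw) (hleaf w hw)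
          obtain ⟨x', hx', rfl⟩ := mem_map.1 hx
          have := hleaf x' hx'
          simp only [Fin.valEmbedding_apply] at hxw
          omega
        · exact (card_singleton _).symm
    _ = 2 * s := by simp

theorem sum_card_subtrees (hp : 0 < p) :
    ∑ t ∈ subtrees (doubleBroom (p + 2 * s) s), #t =
      2 ^ (2 * s) * (p + s) + 2 ^ s * (p + s) * (p - 1) + p.choose 3 + 2 * s := by
  rw [← sum_filter_add_sum_filter_not _ (fun t => ∃ v : Fin (p + 2 * s), v ∈ t ∧ (v : ℕ) < p),
    sum_card_subtrees_meeting_path, sum_card_subtrees_avoiding_path hp, sum_card_branchSet hp]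

end DoubleBroom

theorem stmt12_general (n s : ℕ) (hn : 2 * s + 2 ≤ n) :
    (∑ t ∈ subtrees (doubleBroom n s), t.card) =
      2 ^ (2 * s) * (n - s) + 2 ^ s * (n - s) * (n - 2 * s - 1) +
        (n - 2 * s).choose 3 + 2 * s := by
  obtain ⟨p, rfl⟩ : ∃ p, n = p + 2 * s := ⟨n - 2 * s, by omega⟩
  rw [Nat.add_sub_cancel, show p + 2 * s - s = p + s by omega]
  exact DoubleBroom.sum_card_subtrees (by omega)

/-- For the double-broom consisting of a path with `n − 2s` vertices and `s` pendant
leaves at each endpoint (`s ≥ 1`, `n − 2s ≥ 2`), the sum of the orders of all subtrees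
equals `2^{2s}(n − s) + 2^s(n − s)(n − 2s − 1) + C(n−2s, 3) + 2s`. -/
theorem stmt12 (n s : ℕ) (hs : 1 ≤ s) (hn : 2 * s + 2 ≤ n) :
    (∑ t ∈ subtrees (doubleBroom n s), t.card) =
      2 ^ (2 * s) * (n - s) + 2 ^ s * (n - s) * (n - 2 * s - 1) +
        (n - 2 * s).choose 3 + 2 * s :=
  stmt12_general n s hn
end
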